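/- arXiv:1307.8340 — 5 statements merged into one kernel-verified Lean document; each statement's English description precedes it below -/
import Mathlib

section
/- Let A, B be nonzero reals and a = (a₁,a₂), b = (b₁,b₂) unit vectors in ℝ², and define φ, ψ : ℝ² → ℝ by φ(x,y) = (A/2)(a₁x+a₂y)², ψ(x,y) = (B/2)(b₁x+b₂y)². If L + N = 0 at the origin, where L = φ_xy ψ_yy − φ_yy ψ_xy and N = φ_xx ψ_xy − φ_xy ψ_xx, then AB (a·b)(a₁b₂ − a₂b₁) = 0; hence either a and b are parallel or a ⊥ b. -/
/-- Partial derivative with respect to the first variable. -/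
noncomputable def pdx (f : ℝ → ℝ → ℝ) : ℝ → ℝ → ℝ :=
  fun x y => deriv (fun t => f t y) x

/-- Partial derivative with respect to the second variable. -/
noncomputable def pdy (f : ℝ → ℝ → ℝ) : ℝ → ℝ → ℝ :=
  fun x y => deriv (fun t => f x t) y

/-! The Hessian of a ridge function `g (c x + d y)` is `g'' · (c, d) ⊗ (c, d)`, so for
`φ = (A/2)(a·z)²` and `ψ = (B/2)(b·z)²` the expression `L + N` factors as
`A B (a·b)(a₁b₂ - a₂b₁)`. -/

section Ridge

variable {g : ℝ → ℝ}

theorem hasDerivAt_comp_mul_add (hg : Differentiable ℝ g) (c e x : ℝ) :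
    HasDerivAt (fun t => g (c * t + e)) (c * deriv g (c * x + e)) x := by
  have hlin : HasDerivAt (fun t => c * t + e) c x := by
    simpa using ((hasDerivAt_id x).const_mul c).add_const e
  rw [mul_comm c]
  exact (hg _).hasDerivAt.comp x hlin

theorem pdx_const_mul_ridge (hg : Differentiable ℝ g) (k c d : ℝ) :
    pdx (fun x y => k * g (c * x + d * y)) = fun x y => k * c * deriv g (c * x + d * y) := by
  funext x y
  rw [pdx, ((hasDerivAt_comp_mul_add hg c (d * y) x).const_mul k).deriv, mul_assoc]

theorem pdy_const_mul_ridge (hg : Differentiable ℝ g) (k c d : ℝ) :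
    pdy (fun x y => k * g (c * x + d * y)) = fun x y => k * d * deriv g (c * x + d * y) := by
  funext x y
  have h := (hasDerivAt_comp_mul_add hg d (c * x) y).const_mul k
  simp only [pdy, add_comm (c * x)] at h ⊢
  rw [h.deriv, mul_assoc]

theorem pdx_ridge (hg : Differentiable ℝ g) (c d : ℝ) :
    pdx (fun x y => g (c * x + d * y)) = fun x y => c * deriv g (c * x + d * y) := by
  simpa using pdx_const_mul_ridge hg 1 c d

theorem pdy_ridge (hg : Differentiable ℝ g) (c d : ℝ) :
    pdy (fun x y => g (c * x + d * y)) = fun x y => d * deriv g (c * x + d * y) := by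
  simpa using pdy_const_mul_ridge hg 1 c d

theorem pdx_pdx_ridge (hg : Differentiable ℝ g) (hg' : Differentiable ℝ (deriv g)) (c d : ℝ) :
    pdx (pdx fun x y => g (c * x + d * y)) =
      fun x y => c * c * deriv (deriv g) (c * x + d * y) := by
  rw [pdx_ridge hg, pdx_const_mul_ridge hg']

theorem pdy_pdx_ridge (hg : Differentiable ℝ g) (hg' : Differentiable ℝ (deriv g)) (c d : ℝ) :
    pdy (pdx fun x y => g (c * x + d * y)) =
      fun x y => c * d * deriv (deriv g) (c * x + d * y) := by
  rw [pdx_ridge hg, pdy_const_mul_ridge hg']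

theorem pdy_pdy_ridge (hg : Differentiable ℝ g) (hg' : Differentiable ℝ (deriv g)) (c d : ℝ) :
    pdy (pdy fun x y => g (c * x + d * y)) =
      fun x y => d * d * deriv (deriv g) (c * x + d * y) := by
  rw [pdy_ridge hg, pdy_const_mul_ridge hg']

end Ridge

theorem deriv_half_mul_sq (C : ℝ) : deriv (fun s : ℝ => C / 2 * s ^ 2) = fun s => C * s := by
  funext s
  rw [((hasDerivAt_pow 2 s).const_mul (C / 2)).deriv]
  norm_num
  ring

theorem hessian_half_mul_sq_ridge {f : ℝ → ℝ → ℝ} {C c d : ℝ}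
    (hf : f = fun x y => C / 2 * (c * x + d * y) ^ 2) (x y : ℝ) :
    pdx (pdx f) x y = C * c * c ∧ pdy (pdx f) x y = C * c * d ∧ pdy (pdy f) x y = C * d * d := by
  set g : ℝ → ℝ := fun s => C / 2 * s ^ 2
  have hg : Differentiable ℝ g := by fun_prop
  have hderiv : deriv g = fun s => C * s := deriv_half_mul_sq C
  have hdg : Differentiable ℝ (deriv g) := by rw [hderiv]; fun_prop
  have hderiv2 : deriv (deriv g) = fun _ => C := by rw [hderiv]; funext s; simp
  rw [show f = fun x y => g (c * x + d * y) from hf, pdx_pdx_ridge hg hdg, pdy_pdx_ridge hg hdg,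
    pdy_pdy_ridge hg hdg, hderiv2]
  exact ⟨by ring, by ring, by ring⟩

theorem stmt_5_general (A B a₁ a₂ b₁ b₂ : ℝ) (hA : A ≠ 0) (hB : B ≠ 0)
    (φ ψ : ℝ → ℝ → ℝ)
    (hφ : φ = fun x y => (A/2) * (a₁*x + a₂*y)^2)
    (hψ : ψ = fun x y => (B/2) * (b₁*x + b₂*y)^2)
    (hLN : pdy (pdx φ) 0 0 * pdy (pdy ψ) 0 0 - pdy (pdy φ) 0 0 * pdy (pdx ψ) 0 0
         + pdx (pdx φ) 0 0 * pdy (pdx ψ) 0 0 - pdy (pdx φ) 0 0 * pdx (pdx ψ) 0 0 = 0) :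
    A * B * (a₁*b₁ + a₂*b₂) * (a₁*b₂ - a₂*b₁) = 0 ∧
    (a₁*b₂ - a₂*b₁ = 0 ∨ a₁*b₁ + a₂*b₂ = 0) := by
  obtain ⟨φxx, φxy, φyy⟩ := hessian_half_mul_sq_ridge hφ 0 0
  obtain ⟨ψxx, ψxy, ψyy⟩ := hessian_half_mul_sq_ridge hψ 0 0
  rw [φxx, φxy, φyy, ψxx, ψxy, ψyy] at hLN
  have key : A * B * (a₁*b₁ + a₂*b₂) * (a₁*b₂ - a₂*b₁) = 0 := by linear_combination hLN
  refine ⟨key, ?_⟩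
  simpa [hA, hB, or_comm] using key

/-- for φ = (A/2)(a₁x+a₂y)², ψ = (B/2)(b₁x+b₂y)² with a, b unit vectors
and A, B ≠ 0, if L + N = 0 at the origin (L = φ_xy ψ_yy − φ_yy ψ_xy,
N = φ_xx ψ_xy − φ_xy ψ_xx), then AB(a·b)(a₁b₂ − a₂b₁) = 0; hence a and b are
parallel or orthogonal. -/
theorem stmt_5 (A B a₁ a₂ b₁ b₂ : ℝ) (hA : A ≠ 0) (hB : B ≠ 0)
    (ha : a₁^2 + a₂^2 = 1) (hb : b₁^2 + b₂^2 = 1)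
    (φ ψ : ℝ → ℝ → ℝ)
    (hφ : φ = fun x y => (A/2) * (a₁*x + a₂*y)^2)
    (hψ : ψ = fun x y => (B/2) * (b₁*x + b₂*y)^2)
    (hLN : pdy (pdx φ) 0 0 * pdy (pdy ψ) 0 0 - pdy (pdy φ) 0 0 * pdy (pdx ψ) 0 0
         + pdx (pdx φ) 0 0 * pdy (pdx ψ) 0 0 - pdy (pdx φ) 0 0 * pdx (pdx ψ) 0 0 = 0) :
    A * B * (a₁*b₁ + a₂*b₂) * (a₁*b₂ - a₂*b₁) = 0 ∧
    (a₁*b₂ - a₂*b₁ = 0 ∨ a₁*b₁ + a₂*b₂ = 0) :=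
  stmt_5_general A B a₁ a₂ b₁ b₂ hA hB φ ψ hφ hψ hLN
end

section
/- Let A_X be the 3×3 matrix [[q F_xq, q F_yq, q F_qq + F_q],[F_xq, F_yq, F_qq],[−q F_xx − F_xy, −q F_xy − F_yy, −q F_xq − F_yq − F_x]] evaluated at a point where q = 0, F_q = 0, F_qq = 0, and F_x = 0. Then the eigenvalues of A_X are 0, μ, −μ with μ = F_yq. -/
open Polynomial

/-- the linearization A_X of the lifted vector field at the singular
point P_S, where q = 0, F_q = 0, F_qq = 0 and F_x = 0, has eigenvalues 0, μ, −μ with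
μ = F_yq: its characteristic polynomial is X³ − μ²X. -/
theorem stmt_9 (q Fx Fq Fxx Fxy Fyy Fxq Fyq Fqq : ℝ)
    (hq : q = 0) (hFq : Fq = 0) (hFqq : Fqq = 0) (hFx : Fx = 0)
    (A : Matrix (Fin 3) (Fin 3) ℝ)
    (hA : A = !![q*Fxq, q*Fyq, q*Fqq + Fq;
                 Fxq, Fyq, Fqq;
                 -q*Fxx - Fxy, -q*Fxy - Fyy, -q*Fxq - Fyq - Fx]) :
    A.charpoly = X^3 - C (Fyq^2) * X := by
  subst hq hFq hFqq hFx hA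
  rw [Matrix.charpoly, Matrix.det_fin_three]
  simp [Matrix.charmatrix_apply, Matrix.one_apply]
  ring
end

section
/- Consider the binary differential equation (ζ₄x + ζ₅y)dx dy + (ζ₃x + ζ₄y)dx² = 0 with ζ₅ ≠ 0 and ζ₄² − ζ₃ζ₅ ≠ 0. Then there exists an invertible linear change of coordinates x = βY (α=0 case), y = γX + δY, with β, γ, δ real, βγδ appropriately chosen, transforming the equation into Y dY² ± 2X dX dY = 0 (sign determined by the sign of ζ₅·(ζ₄² − ζ₃ζ₅)-data). Concretely: there exist reals β ≠ 0, γ, δ with δζ₅ + βζ₄ = 0, γ²ζ₅ = ±2, and β(δζ₄ + βζ₃) = ±1. -/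
/-! Taking δ = -βζ₄/ζ₅ kills the first condition and turns the last one into
β² · (ζ₃ζ₅ - ζ₄²)/ζ₅ = ±1. Both remaining conditions then only ask to scale a nonzero real
by a nonzero square to a prescribed absolute value, which `t = √(k / |c|)` does. -/

lemma exists_sq_mul_eq_or_eq_neg {c k : ℝ} (hc : c ≠ 0) (hk : 0 < k) :
    ∃ t : ℝ, t ≠ 0 ∧ (t ^ 2 * c = k ∨ t ^ 2 * c = -k) := by
  have hc' : 0 < |c| := abs_pos.mpr hc
  refine ⟨√(k / |c|), (Real.sqrt_pos.mpr (div_pos hk hc')).ne', ?_⟩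
  rw [Real.sq_sqrt (div_pos hk hc').le]
  rcases abs_cases c with ⟨habs, -⟩ | ⟨habs, -⟩ <;> rw [habs]
  · exact Or.inl (div_mul_cancel₀ k hc)
  · exact Or.inr (by rw [div_neg, neg_mul, div_mul_cancel₀ k hc])

/-- the 1-jet of the binary differential equation of asymptotic lines,
(ζ₄x + ζ₅y)dx dy + (ζ₃x + ζ₄y)dx² = 0 with ζ₅ ≠ 0, ζ₄² − ζ₃ζ₅ ≠ 0, can be put in the
normal form Y dY² ± 2X dX dY = 0 by an invertible linear change x = βY, y = γX + δY:
there exist β ≠ 0, γ, δ with δζ₅ + βζ₄ = 0, γ²ζ₅ = ±2 and β(δζ₄ + βζ₃) = ±1. -/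
theorem stmt_12 (ζ₃ ζ₄ ζ₅ : ℝ) (h₅ : ζ₅ ≠ 0) (hdisc : ζ₄^2 - ζ₃*ζ₅ ≠ 0) :
    ∃ β γ δ : ℝ, β ≠ 0 ∧ γ ≠ 0 ∧
      δ*ζ₅ + β*ζ₄ = 0 ∧
      (γ^2*ζ₅ = 2 ∨ γ^2*ζ₅ = -2) ∧
      (β*(δ*ζ₄ + β*ζ₃) = 1 ∨ β*(δ*ζ₄ + β*ζ₃) = -1) := by
  have hc : (ζ₃ * ζ₅ - ζ₄ ^ 2) / ζ₅ ≠ 0 :=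
    div_ne_zero (by contrapose! hdisc; linarith) h₅
  obtain ⟨β, hβ, hβc⟩ := exists_sq_mul_eq_or_eq_neg hc one_pos
  obtain ⟨γ, hγ, hγζ⟩ := exists_sq_mul_eq_or_eq_neg h₅ two_pos
  have hreduce : β * (-β * ζ₄ / ζ₅ * ζ₄ + β * ζ₃) = β ^ 2 * ((ζ₃ * ζ₅ - ζ₄ ^ 2) / ζ₅) := by
    field_simp
    ring
  refine ⟨β, γ, -β * ζ₄ / ζ₅, hβ, hγ, by field_simp; ring, hγζ, ?_⟩
  rwa [hreduce]
end

section
/- Wintgen's inequality: for an immersed surface in ℝ⁴ with second fundamental form coefficients a,b,c,e,f,g in an adapted orthonormal frame, letting H² = ((a+c)/2)² + ((e+g)/2)², K = (ac−b²)+(eg−f²), κ = (a−c)f − (e−g)b, one has H² ≥ K + |κ|. -/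
/-- Wintgen's inequality: with H² = ((a+c)/2)² + ((e+g)/2)²,
K = (ac−b²)+(eg−f²) and κ = (a−c)f − (e−g)b, one has H² ≥ K + |κ|. -/
theorem stmt_14 (a b c e f g : ℝ) :
    ((a+c)/2)^2 + ((e+g)/2)^2 ≥
      ((a*c - b^2) + (e*g - f^2)) + |(a - c)*f - (e - g)*b| := by
  rcases abs_cases ((a - c)*f - (e - g)*b) with ⟨h, _⟩ | ⟨h, _⟩ <;> rw [h] <;>
    nlinarith [sq_nonneg (a - c - 2*f), sq_nonneg (e - g + 2*b),
      sq_nonneg (a - c + 2*f), sq_nonneg (e - g - 2*b)]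
end

section
/- Equality case of Wintgen's inequality: with notation as in Wintgen's inequality, H² = K + |κ| holds if and only if the curvature ellipse is a circle, i.e. if and only if (a − c, 2b) and (e − g, 2f) are orthogonal vectors of equal length in ℝ², i.e. (a−c)² + 4b² = (e−g)² + 4f² and (a−c)(e−g) + 4bf = 0. -/
/-- equality case of Wintgen's inequality: H² = K + |κ| iff the
curvature ellipse is a circle, i.e. iff (a−c, 2b) and (e−g, 2f) are orthogonal
vectors of the same length. -/
theorem stmt_15 (a b c e f g : ℝ) :
    ((a+c)/2)^2 + ((e+g)/2)^2 =
        ((a*c - b^2) + (e*g - f^2)) + |(a - c)*f - (e - g)*b| ↔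
      ((a - c)^2 + 4*b^2 = (e - g)^2 + 4*f^2 ∧ (a - c)*(e - g) + 4*b*f = 0) := by
  rcases abs_cases ((a - c)*f - (e - g)*b) with ⟨h, h'⟩ | ⟨h, h'⟩ <;> rw [h] <;>
    constructor
  · intro hyp
    have key : ((a - c) - 2*f)^2 + (2*b + (e - g))^2 = 0 := by nlinarith
    have h1 : (a - c) - 2*f = 0 := by
      have h0 : ((a - c) - 2*f)^2 = 0 := by
        nlinarith [sq_nonneg ((a-c)-2*f), sq_nonneg (2*b+(e-g))]
      exact pow_eq_zero_iff (two_ne_zero) |>.mp h0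
    have h2 : 2*b + (e - g) = 0 := by
      have h0 : (2*b + (e - g))^2 = 0 := by
        nlinarith [sq_nonneg ((a-c)-2*f), sq_nonneg (2*b+(e-g))]
      exact pow_eq_zero_iff (two_ne_zero) |>.mp h0
    exact ⟨by linear_combination ((a-c)+2*f)*h1 + (2*b-(e-g))*h2,
      by linear_combination (e-g)*h1 + 2*f*h2⟩
  · rintro ⟨h1, h2⟩
    have key : (4*((a-c)*f-(e-g)*b) - ((a-c)^2+4*b^2+(e-g)^2+4*f^2)) *
        (4*((a-c)*f-(e-g)*b) + ((a-c)^2+4*b^2+(e-g)^2+4*f^2)) = 0 := by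
      linear_combination (-((a-c)^2+4*b^2-(e-g)^2-4*f^2))*h1 - 4*((a-c)*(e-g)+4*b*f)*h2
    have hS : 0 ≤ (a-c)^2+4*b^2+(e-g)^2+4*f^2 := by positivity
    rcases mul_eq_zero.mp key with hk | hk
    · linear_combination (-(1:ℝ)/4)*hk
    · linarith
  · intro hyp
    have key : ((a - c) + 2*f)^2 + (2*b - (e - g))^2 = 0 := by nlinarith
    have h1 : (a - c) + 2*f = 0 := by
      have h0 : ((a - c) + 2*f)^2 = 0 := by
        nlinarith [sq_nonneg ((a-c)+2*f), sq_nonneg (2*b-(e-g))]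
      exact pow_eq_zero_iff (two_ne_zero) |>.mp h0
    have h2 : 2*b - (e - g) = 0 := by
      have h0 : (2*b - (e - g))^2 = 0 := by
        nlinarith [sq_nonneg ((a-c)+2*f), sq_nonneg (2*b-(e-g))]
      exact pow_eq_zero_iff (two_ne_zero) |>.mp h0
    exact ⟨by linear_combination ((a-c)-2*f)*h1 + (2*b+(e-g))*h2,
      by linear_combination (e-g)*h1 + 2*f*h2⟩
  · rintro ⟨h1, h2⟩
    have key : (4*((a-c)*f-(e-g)*b) - ((a-c)^2+4*b^2+(e-g)^2+4*f^2)) *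
        (4*((a-c)*f-(e-g)*b) + ((a-c)^2+4*b^2+(e-g)^2+4*f^2)) = 0 := by
      linear_combination (-((a-c)^2+4*b^2-(e-g)^2-4*f^2))*h1 - 4*((a-c)*(e-g)+4*b*f)*h2
    have hS : 0 ≤ (a-c)^2+4*b^2+(e-g)^2+4*f^2 := by positivity
    rcases mul_eq_zero.mp key with hk | hk
    · linarith
    · linear_combination ((1:ℝ)/4)*hk
end
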